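/- Termination under flooding (set-theoretic core of the cooperative-termination theorem): Let X be a compact topological space, let n : ℕ, and for each robot r ∈ Fin n let K(r) : ℕ → Set X denote the region robot r knows to be explored, where each K(r) is monotone in time (t ≤ t' implies K(r)(t) ⊆ K(r)(t')). Assume exploration flooding: for all robots r, r' and every time t there exists t' ≥ t with K(r)(t) ⊆ K(r')(t'). Assume exploration liveness for distributed knowledge: there is a collection 𝒰 of open subsets of X with ⋃ 𝒰 = X such that for every U ∈ 𝒰 there exists a time t with U ⊆ ⋃_{r ∈ Fin n} K(r)(t). Then there exists a time T such that K(r)(T) = X for every robot r ∈ Fin n, i.e. eventually every robot knows the whole space is explored. -/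

import Mathlib

/-!
Distributed knowledge `⋃ r, K r t` grows with `t`, so its interiors form a directed open cover
of the compact space; hence at a single time `t` it is already the whole space. Flooding then carries each of the finitely
many pieces `K r t` to every robot, and a common upper bound of the finitely many flooding times
is a time at which every robot knows everything.
-/

open Set

theorem CompactSpace.exists_eq_univ_of_monotone {X : Type*} [TopologicalSpace X] [CompactSpace X]
    {τ : Type*} [Preorder τ] [IsDirectedOrder τ] [Nonempty τ] (D : τ → Set X) (hD : Monotone D)
    (𝒰 : Set (Set X)) (hopen : ∀ U ∈ 𝒰, IsOpen U) (hcov : ⋃₀ 𝒰 = univ)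
    (hsub : ∀ U ∈ 𝒰, ∃ t, U ⊆ D t) : ∃ t, D t = univ := by
  have hcover : univ ⊆ ⋃ t, interior (D t) := by
    rw [← hcov]
    rintro x ⟨U, hU, hxU⟩
    obtain ⟨t, hUt⟩ := hsub U hU
    exact mem_iUnion.2 ⟨t, interior_maximal hUt (hopen U hU) hxU⟩
  obtain ⟨t, ht⟩ := isCompact_univ.elim_directed_cover _ (fun _ => isOpen_interior) hcover
    (Monotone.directed_le fun _ _ h => interior_mono (hD h))
  exact ⟨t, univ_subset_iff.1 (ht.trans interior_subset)⟩

theorem exists_forall_iUnion_subset_of_flooding {X ι τ : Type*} [Finite ι] [Preorder τ]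
    [IsDirectedOrder τ] [Nonempty τ] (K : ι → τ → Set X) (hK : ∀ r, Monotone (K r))
    (hflood : ∀ r r' t, ∃ t', K r t ⊆ K r' t') (t : τ) :
    ∃ T, ∀ r', ⋃ r, K r t ⊆ K r' T := by
  choose t' ht' using fun p : ι × ι => hflood p.1 p.2 t
  obtain ⟨T, hT⟩ := Finite.exists_le t'
  exact ⟨T, fun r' => iUnion_subset fun r => (ht' (r, r')).trans (hK r' (hT (r, r')))⟩

/-- Termination under flooding: over a compact space, with monotone knowledge,
exploration flooding, and exploration liveness for distributed knowledge, eventually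
every robot knows the whole space to be explored. -/
theorem termination_under_flooding {X : Type*} [TopologicalSpace X] [CompactSpace X]
    (n : ℕ) (K : Fin n → ℕ → Set X)
    (hmono : ∀ (r : Fin n) (t t' : ℕ), t ≤ t' → K r t ⊆ K r t')
    (hflood : ∀ (r r' : Fin n) (t : ℕ), ∃ t' : ℕ, t ≤ t' ∧ K r t ⊆ K r' t')
    (hlive : ∃ 𝒰 : Set (Set X), (∀ U ∈ 𝒰, IsOpen U) ∧ ⋃₀ 𝒰 = Set.univ ∧
      ∀ U ∈ 𝒰, ∃ t : ℕ, U ⊆ ⋃ r : Fin n, K r t) :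
    ∃ T : ℕ, ∀ r : Fin n, K r T = Set.univ := by
  obtain ⟨𝒰, hopen, hcov, hsub⟩ := hlive
  have hK : ∀ r, Monotone (K r) := fun r _ _ => hmono r _ _
  obtain ⟨t, hdist⟩ := CompactSpace.exists_eq_univ_of_monotone (fun t => ⋃ r, K r t)
    (fun _ _ h => iUnion_mono fun r => hK r h) 𝒰 hopen hcov hsub
  obtain ⟨T, hT⟩ := exists_forall_iUnion_subset_of_flooding K hK
    (fun r r' t => (hflood r r' t).imp fun _ => And.right) t
  exact ⟨T, fun r => univ_subset_iff.1 (hdist ▸ hT r)⟩
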